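/- (Lemma 4.) Let G be the corresponding graph of a WAP instance <J,I,v>. If the edge (y_j,t) belongs to some minimum (s,t)-cut of G and there exists a maximum (s,t)-flow f with f(x_i,y_j)>0, then job j_i is critical for <J,I,v>. -/
import Mathlib


open Finset

/-- A feasible assignment for the WAP instance `⟨J, I, v⟩`: times `t i j ≥ 0`,
`t i j = 0` if job `i` is not alive in interval `j`, `t i j ≤ |I j|`,
the capacity `m j * |I j|` of each interval is respected, and each job `i`
receives exactly `w i / v` units of processing time. -/
def WFeasAssign {n L : ℕ} (w : Fin n → ℝ) (len : Fin L → ℝ) (mj : Fin L → ℕ)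
    (Alive : Fin n → Fin L → Bool) (v : ℝ) (t : Fin n → Fin L → ℝ) : Prop :=
  (∀ i j, 0 ≤ t i j) ∧
  (∀ i j, ¬ Alive i j → t i j = 0) ∧
  (∀ i j, t i j ≤ len j) ∧
  (∀ j, ∑ i ∈ univ.filter (fun i => Alive i j), t i j ≤ (mj j : ℝ) * len j) ∧
  (∀ i, ∑ j ∈ univ.filter (fun j => Alive i j), t i j = w i / v)

/-- The WAP instance `⟨J, I, v⟩` is feasible if a feasible assignment exists. -/
def WFeasible {n L : ℕ} (w : Fin n → ℝ) (len : Fin L → ℝ) (mj : Fin L → ℕ)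
    (Alive : Fin n → Fin L → Bool) (v : ℝ) : Prop :=
  ∃ t, WFeasAssign w len mj Alive v t

/-- Job `i` is critical for `⟨J, I, v⟩`: in every feasible assignment and every
interval `j` in which `i` is alive, either `t i j = |I j|` or the whole capacity
`m j * |I j|` of the interval is used. -/
def CriticalJob {n L : ℕ} (w : Fin n → ℝ) (len : Fin L → ℝ) (mj : Fin L → ℕ)
    (Alive : Fin n → Fin L → Bool) (v : ℝ) (i : Fin n) : Prop :=
  ∀ t, WFeasAssign w len mj Alive v t → ∀ j, Alive i j →
    t i j = len j ∨ ∑ k ∈ univ.filter (fun k => Alive k j), t k j = (mj j : ℝ) * len j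

/-- The instance `⟨J, I, v⟩` is critical: it is feasible, but `⟨J, I, v'⟩` is
infeasible for every speed `0 < v' < v`. -/
def CriticalInstance {n L : ℕ} (w : Fin n → ℝ) (len : Fin L → ℝ) (mj : Fin L → ℕ)
    (Alive : Fin n → Fin L → Bool) (v : ℝ) : Prop :=
  WFeasible w len mj Alive v ∧
    ∀ v', 0 < v' → v' < v → ¬ WFeasible w len mj Alive v'

/-- `f` is a flow for capacities `c` with source `s` and sink `t`:
`0 ≤ f ≤ c` on every (ordered) pair of nodes, and flow is conserved at every
node other than `s` and `t`. -/
def IsFlow {V : Type*} [Fintype V] (c f : V → V → ℝ) (s t : V) : Prop :=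
  (∀ u v, 0 ≤ f u v) ∧ (∀ u v, f u v ≤ c u v) ∧
  (∀ v, v ≠ s → v ≠ t → ∑ u, f u v = ∑ u, f v u)

/-- The value of a flow: the net flow leaving the source `s`. -/
def flowValue {V : Type*} [Fintype V] (f : V → V → ℝ) (s : V) : ℝ :=
  (∑ u, f s u) - (∑ u, f u s)

/-- `f` is a maximum flow. -/
def IsMaxFlow {V : Type*} [Fintype V] (c f : V → V → ℝ) (s t : V) : Prop :=
  IsFlow c f s t ∧ ∀ g, IsFlow c g s t → flowValue g s ≤ flowValue f s

/-- An `(s,t)`-cut, identified with its source side `X`: `s ∈ X` and `t ∉ X`.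
The edges of the cut are the pairs `(u, v)` with `u ∈ X` and `v ∉ X`. -/
def IsCut {V : Type*} (X : Finset V) (s t : V) : Prop := s ∈ X ∧ t ∉ X

/-- The capacity of the cut with source side `X`. -/
def cutCap {V : Type*} [Fintype V] [DecidableEq V] (c : V → V → ℝ) (X : Finset V) : ℝ :=
  ∑ u ∈ X, ∑ v ∈ Xᶜ, c u v

/-- `X` is (the source side of) a minimum `(s,t)`-cut. -/
def IsMinCut {V : Type*} [Fintype V] [DecidableEq V] (c : V → V → ℝ) (X : Finset V)
    (s t : V) : Prop :=
  IsCut X s t ∧ ∀ Y : Finset V, IsCut Y s t → cutCap c X ≤ cutCap c Y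

/-- The nodes of the corresponding graph of a WAP instance: a source `src`,
one node `x i` per job, one node `y j` per interval, and a sink `sink`. -/
inductive Node (n L : ℕ) where
  | src : Node n L
  | x : Fin n → Node n L
  | y : Fin L → Node n L
  | sink : Node n L
  deriving DecidableEq, Fintype

/-- The capacities of the corresponding graph of the WAP instance `⟨J, I, v⟩`:
`cap src (x i) = w i / v`, `cap (x i) (y j) = |I j|` when `i` is alive in `j`,
`cap (y j) sink = m j * |I j|`, and `0` on all other (non-)edges. -/
noncomputable def cap {n L : ℕ} (w : Fin n → ℝ) (len : Fin L → ℝ) (mj : Fin L → ℕ)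
    (Alive : Fin n → Fin L → Bool) (v : ℝ) : Node n L → Node n L → ℝ
  | .src, .x i => w i / v
  | .x i, .y j => if Alive i j then len j else 0
  | .y j, .sink => (mj j : ℝ) * len j
  | _, _ => 0

section AuxFlow

variable {V : Type*} [Fintype V] [DecidableEq V]

lemma flowValue_eq_net (c f : V → V → ℝ) (s t : V) (hf : IsFlow c f s t)
    (X : Finset V) (hs : s ∈ X) (ht : t ∉ X) :
    flowValue f s = (∑ u ∈ X, ∑ v ∈ Xᶜ, f u v) - (∑ u ∈ Xᶜ, ∑ v ∈ X, f u v) := by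
  have key : ∑ u ∈ X, ((∑ v, f u v) - (∑ v, f v u)) = flowValue f s := by
    rw [Finset.sum_eq_single_of_mem s hs]
    · rfl
    · intro u hu hus
      have hut : u ≠ t := fun h => ht (h ▸ hu)
      rw [hf.2.2 u hus hut]; ring
  rw [← key]
  have c1 : ∑ u ∈ X, ∑ v ∈ X, f v u = ∑ u ∈ X, ∑ v ∈ X, f u v := Finset.sum_comm
  have c2 : ∑ u ∈ X, ∑ v ∈ Xᶜ, f v u = ∑ u ∈ Xᶜ, ∑ v ∈ X, f u v := Finset.sum_comm
  have split : ∀ u ∈ X, (∑ v, f u v) - (∑ v, f v u) =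
      ((∑ v ∈ X, f u v) + (∑ v ∈ Xᶜ, f u v)) - ((∑ v ∈ X, f v u) + (∑ v ∈ Xᶜ, f v u)) := by
    intro u _
    rw [Finset.sum_add_sum_compl, Finset.sum_add_sum_compl]
  rw [Finset.sum_congr rfl split]
  simp only [Finset.sum_sub_distrib, Finset.sum_add_distrib]
  rw [c1, c2]; ring

lemma flowValue_le_cutCap (c f : V → V → ℝ) (s t : V) (hf : IsFlow c f s t)
    (X : Finset V) (hs : s ∈ X) (ht : t ∉ X) :
    flowValue f s ≤ cutCap c X := by
  rw [flowValue_eq_net c f s t hf X hs ht]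
  have h1 : ∑ u ∈ X, ∑ v ∈ Xᶜ, f u v ≤ cutCap c X :=
    Finset.sum_le_sum fun u _ => Finset.sum_le_sum fun v _ => hf.2.1 u v
  have h2 : 0 ≤ ∑ u ∈ Xᶜ, ∑ v ∈ X, f u v :=
    Finset.sum_nonneg fun u _ => Finset.sum_nonneg fun v _ => hf.1 u v
  linarith

lemma cut_saturated (c f : V → V → ℝ) (s t : V) (hf : IsFlow c f s t)
    (X : Finset V) (hs : s ∈ X) (ht : t ∉ X) (heq : flowValue f s = cutCap c X) :
    (∀ u ∈ X, ∀ v ∈ Xᶜ, f u v = c u v) ∧ (∀ u ∈ Xᶜ, ∀ v ∈ X, f u v = 0) := by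
  have hnet := flowValue_eq_net c f s t hf X hs ht
  have hS1 : 0 ≤ ∑ u ∈ X, ∑ v ∈ Xᶜ, (c u v - f u v) :=
    Finset.sum_nonneg fun u _ => Finset.sum_nonneg fun v _ => by linarith [hf.2.1 u v]
  have hS2 : 0 ≤ ∑ u ∈ Xᶜ, ∑ v ∈ X, f u v :=
    Finset.sum_nonneg fun u _ => Finset.sum_nonneg fun v _ => hf.1 u v
  have hsum : (∑ u ∈ X, ∑ v ∈ Xᶜ, (c u v - f u v)) + (∑ u ∈ Xᶜ, ∑ v ∈ X, f u v) = 0 := by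
    have : ∑ u ∈ X, ∑ v ∈ Xᶜ, (c u v - f u v) =
        cutCap c X - ∑ u ∈ X, ∑ v ∈ Xᶜ, f u v := by
      simp only [Finset.sum_sub_distrib]; rfl
    rw [this]; rw [heq, hnet] at *; ring
  have h1 : ∑ u ∈ X, ∑ v ∈ Xᶜ, (c u v - f u v) = 0 := le_antisymm (by linarith) hS1
  have h2 : ∑ u ∈ Xᶜ, ∑ v ∈ X, f u v = 0 := le_antisymm (by linarith) hS2
  constructor
  · intro u hu v hv
    have := (Finset.sum_eq_zero_iff_of_nonneg
      (fun u _ => Finset.sum_nonneg fun v _ => by linarith [hf.2.1 u v])).mp h1 u hu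
    have := (Finset.sum_eq_zero_iff_of_nonneg
      (fun v _ => by linarith [hf.2.1 u v])).mp this v hv
    linarith
  · intro u hu v hv
    have := (Finset.sum_eq_zero_iff_of_nonneg
      (fun u _ => Finset.sum_nonneg fun v _ => hf.1 u v)).mp h2 u hu
    exact (Finset.sum_eq_zero_iff_of_nonneg (fun v _ => hf.1 u v)).mp this v hv

end AuxFlow

def nodeEquiv (n L : ℕ) : Node n L ≃ (Unit ⊕ Fin n) ⊕ (Fin L ⊕ Unit) where
  toFun u := match u with
    | .src => .inl (.inl ())
    | .x i => .inl (.inr i)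
    | .y j => .inr (.inl j)
    | .sink => .inr (.inr ())
  invFun a := match a with
    | .inl (.inl _) => .src
    | .inl (.inr i) => .x i
    | .inr (.inl j) => .y j
    | .inr (.inr _) => .sink
  left_inv := by rintro (_|_|_|_) <;> rfl
  right_inv := by rintro ((_|_)|(_|_)) <;> rfl

lemma sum_node {n L : ℕ} (F : Node n L → ℝ) :
    ∑ u, F u = F .src + (∑ i, F (.x i)) + (∑ j, F (.y j)) + F .sink := by
  rw [← Equiv.sum_comp (nodeEquiv n L).symm F]
  simp [Fintype.sum_sum_type, nodeEquiv]
  ring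

/-- The flow induced by a feasible assignment. -/
noncomputable def gflow {n L : ℕ} (w : Fin n → ℝ) (Alive : Fin n → Fin L → Bool)
    (v : ℝ) (t : Fin n → Fin L → ℝ) : Node n L → Node n L → ℝ
  | .src, .x i => w i / v
  | .x i, .y j => t i j
  | .y j, .sink => ∑ k ∈ univ.filter (fun k => Alive k j), t k j
  | _, _ => 0

/-- (Lemma 4.) Let `G` be the corresponding graph of a WAP instance `⟨J, I, v⟩`.
If the edge `(y j, sink)` belongs to some minimum `(s,t)`-cut of `G` (i.e. `y j`
lies on the source side `X` of a minimum cut), and there is a maximum flow `f`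
with `f (x i) (y j) > 0`, then job `i` is critical for `⟨J, I, v⟩`. -/
theorem cut_edge_and_positive_flow_implies_critical {n L : ℕ}
    (w : Fin n → ℝ) (len : Fin L → ℝ) (mj : Fin L → ℕ)
    (Alive : Fin n → Fin L → Bool) (v : ℝ)
    (hw : ∀ i, 0 < w i) (hlen : ∀ j, 0 < len j) (hmj : ∀ j, 1 ≤ mj j) (hv : 0 < v)
    (i : Fin n) (j : Fin L) (X : Finset (Node n L)) (f : Node n L → Node n L → ℝ)
    (hX : IsMinCut (cap w len mj Alive v) X Node.src Node.sink)
    (hyj : Node.y j ∈ X)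
    (hf : IsMaxFlow (cap w len mj Alive v) f Node.src Node.sink)
    (hpos : 0 < f (Node.x i) (Node.y j)) :
    CriticalJob w len mj Alive v i := by
  intro t ht j' hAl
  set c := cap w len mj Alive v with hc
  obtain ⟨⟨hsX, hsinkX⟩, hmin⟩ := hX
  set g := gflow w Alive v t with hg
  -- `g` is a flow
  have hgflow : IsFlow c g Node.src Node.sink := by
    refine ⟨?_, ?_, ?_⟩
    · rintro (_|k|l|_) (_|k'|l'|_) <;>
        simp [hg, gflow, ht.1, le_div_iff₀ hv, (hw _).le, hv.le] <;>
        exact Finset.sum_nonneg fun _ _ => ht.1 _ _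
    · rintro (_|k|l|_) (_|k'|l'|_) <;> simp [hg, gflow, hc, cap]
      · by_cases h : Alive k l'
        · simp [h]; exact ht.2.2.1 k l'
        · simp [h, ht.2.1 k l' h]
      · exact ht.2.2.2.1 l
    · rintro (_|k|l|_) hs hsink
      · exact absurd rfl hs
      · have hrow : ∑ j'' ∈ univ.filter (fun j'' => Alive k j''), t k j'' = ∑ j'', t k j'' :=
          Finset.sum_subset (Finset.filter_subset _ _)
            (fun j'' _ hj'' => ht.2.1 k j'' (by simpa using hj''))
        have hw' := ht.2.2.2.2 k
        rw [sum_node (fun u => g u (Node.x k)), sum_node (fun u => g (Node.x k) u)]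
        simp [hg, gflow]
        linarith [hrow, hw']
      · have hcol : ∑ k' ∈ univ.filter (fun k' => Alive k' l), t k' l = ∑ k', t k' l :=
          Finset.sum_subset (Finset.filter_subset _ _)
            (fun k' _ hk' => ht.2.1 k' l (by simpa using hk'))
        rw [sum_node (fun u => g u (Node.y l)), sum_node (fun u => g (Node.y l) u)]
        simp [hg, gflow]
        linarith [hcol]
      · exact absurd rfl hsink
  -- value of `g`
  have hgval : flowValue g Node.src = ∑ k, w k / v := by
    unfold flowValue
    rw [sum_node (fun u => g Node.src u), sum_node (fun u => g u Node.src)]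
    simp [hg, gflow]
  -- the cut {src} has capacity ∑ w k / v
  have hsrc_cut : cutCap c {Node.src} = ∑ k, w k / v := by
    unfold cutCap
    rw [Finset.sum_singleton]
    have : ∑ v' ∈ ({Node.src} : Finset (Node n L))ᶜ, c Node.src v' =
        (∑ v', c Node.src v') - c Node.src Node.src := by
      rw [← Finset.sum_add_sum_compl {Node.src} (fun v' => c Node.src v'),
        Finset.sum_singleton]
      ring
    rw [this, sum_node (fun u => c Node.src u)]
    simp [hc, cap]
  -- chain of inequalities: everything is tight
  have hXle : cutCap c X ≤ ∑ k, w k / v := by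
    rw [← hsrc_cut]
    exact hmin {Node.src} ⟨Finset.mem_singleton_self _, by simp⟩
  have hgle : flowValue g Node.src ≤ cutCap c X :=
    flowValue_le_cutCap c g Node.src Node.sink hgflow X hsX hsinkX
  have hgeq : flowValue g Node.src = cutCap c X := by rw [hgval]; linarith [hgval ▸ hgle]
  have hfle : flowValue f Node.src ≤ cutCap c X :=
    flowValue_le_cutCap c f Node.src Node.sink hf.1 X hsX hsinkX
  have hfeq : flowValue f Node.src = cutCap c X :=
    le_antisymm hfle (hgeq ▸ hf.2 g hgflow)
  obtain ⟨hgfwd, _⟩ := cut_saturated c g Node.src Node.sink hgflow X hsX hsinkX hgeq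
  obtain ⟨_, hfbwd⟩ := cut_saturated c f Node.src Node.sink hf.1 X hsX hsinkX hfeq
  -- `x i ∈ X`, else the backward flow `f (x i) (y j) > 0` is impossible
  have hxi : Node.x i ∈ X := by
    by_contra hxi
    have := hfbwd (Node.x i) (Finset.mem_compl.mpr hxi) (Node.y j) hyj
    linarith
  -- case analysis on the side of `y j'`
  by_cases hyj' : Node.y j' ∈ X
  · right
    have := hgfwd (Node.y j') hyj' Node.sink (Finset.mem_compl.mpr hsinkX)
    simpa [hg, gflow, hc, cap] using this
  · left
    have := hgfwd (Node.x i) hxi (Node.y j') (Finset.mem_compl.mpr hyj')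
    simpa [hg, gflow, hc, cap, hAl] using this
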